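/- If C⁰ and C⁰' are two distinct critical cuts of (G, d, λ) (both achieving the maximal cut ratio r⁰ > 0) and there is an edge e₀ ∈ E_{C⁰'} \ E_{C⁰}, then after fixing the uniform flow on E_{C⁰} and reducing the problem, the minmax ratio of the reduced problem still equals r⁰ (i.e., r¹ = r⁰). -/
import Mathlib


open Finset

/-- A nonnegative flow satisfying the conservation law `A_G x = d`. -/
def WeaklyFeasible {V E : Type*} [Fintype E] [DecidableEq V]
    (tail head : E → V) (d : V → ℝ) (x : E → ℝ) : Prop :=
  (∀ e, 0 ≤ x e) ∧
  ∀ v : V, (∑ e ∈ Finset.univ.filter (fun e => tail e = v), x e)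
      - (∑ e ∈ Finset.univ.filter (fun e => head e = v), x e) = d v

/-- The set `E_C` of arcs crossing the cut `(S, Sᶜ)` in the forward direction. -/
def fwd {V E : Type*} [Fintype E] [DecidableEq V] (tail head : E → V) (S : Finset V) :
    Finset E :=
  Finset.univ.filter (fun e => tail e ∈ S ∧ head e ∉ S)

/-- No fatal cut: every cut with no forward arc has nonpositive deficiency. -/
def NoFatalCut {V E : Type*} [Fintype V] [Fintype E] [DecidableEq V]
    (tail head : E → V) (d : V → ℝ) : Prop :=
  ∀ S : Finset V, S.Nonempty → Sᶜ.Nonempty → fwd tail head S = ∅ → ∑ v ∈ S, d v ≤ 0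

/-- The maximum cut ratio `r⁰ = max_C d_C / λ_C` over cuts `C` with `E_C ≠ ∅`,
taken to be `0` if no ratio is positive (`0` is inserted into the maximum). -/
noncomputable def maxCutRatio {V E : Type*} [Fintype V] [Fintype E] [DecidableEq V]
    (tail head : E → V) (d : V → ℝ) (lam : E → ℝ) : ℝ :=
  Finset.max'
    (insert (0 : ℝ)
      (((Finset.univ : Finset (Finset V)).filter
          (fun S => S.Nonempty ∧ Sᶜ.Nonempty ∧ (fwd tail head S).Nonempty)).image
        (fun S => (∑ v ∈ S, d v) / ∑ e ∈ fwd tail head S, lam e)))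
    (Finset.insert_nonempty _ _)
/-- Arcs of the reduced digraph `G¹`: arcs not crossing the cut in either direction. -/
def NotCrossing {V E : Type*} [DecidableEq V] (tail head : E → V) (S : Finset V)
    (e : E) : Prop :=
  ¬(tail e ∈ S ∧ head e ∉ S) ∧ ¬(head e ∈ S ∧ tail e ∉ S)

instance {V E : Type*} [DecidableEq V] (tail head : E → V) (S : Finset V) :
    DecidablePred (NotCrossing tail head S) := fun e =>
  inferInstanceAs (Decidable (_ ∧ _))

/-- The updated supply vector `d¹` after fixing flow `r⁰ λ_e` on each deleted forward
arc (and `0` on each deleted backward arc). -/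
noncomputable def reducedD {V E : Type*} [Fintype E] [DecidableEq V]
    (tail head : E → V) (d : V → ℝ) (lam : E → ℝ) (r0 : ℝ) (S : Finset V) (v : V) : ℝ :=
  d v - r0 * (∑ e ∈ (fwd tail head S).filter (fun e => tail e = v), lam e)
      + r0 * (∑ e ∈ (fwd tail head S).filter (fun e => head e = v), lam e)

/-- Weak feasibility for the reduced problem `(G¹, d¹, λ¹)`. -/
noncomputable def WeaklyFeasibleReduced {V E : Type*} [Fintype E] [DecidableEq V]
    (tail head : E → V) (d : V → ℝ) (lam : E → ℝ) (r0 : ℝ) (S : Finset V)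
    (x : E → ℝ) : Prop :=
  (∀ e, NotCrossing tail head S e → 0 ≤ x e) ∧
  ∀ v : V,
    (∑ e ∈ Finset.univ.filter (fun e => NotCrossing tail head S e ∧ tail e = v), x e)
      - (∑ e ∈ Finset.univ.filter (fun e => NotCrossing tail head S e ∧ head e = v), x e)
      = reducedD tail head d lam r0 S v


section Aux

open Finset
set_option linter.unusedSectionVars false
set_option maxHeartbeats 1600000

variable {V E : Type*} [Fintype V] [DecidableEq V] [Fintype E] [DecidableEq E]

noncomputable def excess (tail head : E → V) (d : V → ℝ) (y : E → ℝ) (v : V) : ℝ :=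
  (∑ e ∈ univ.filter (fun e => tail e = v), y e)
    - (∑ e ∈ univ.filter (fun e => head e = v), y e) - d v

lemma sum_ite_single (e : E) (ε : ℝ) (s : Finset E) :
    ∑ e' ∈ s, (if e' = e then ε else 0) = if e ∈ s then ε else 0 :=
  Finset.sum_ite_eq' s e (fun _ => ε)

lemma sum_update (y : E → ℝ) (e : E) (ε : ℝ) (s : Finset E) :
    ∑ e' ∈ s, (if e' = e then y e' + ε else y e')
      = (∑ e' ∈ s, y e') + (if e ∈ s then ε else 0) := by
  rw [← sum_ite_single e ε s, ← Finset.sum_add_distrib]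
  exact Finset.sum_congr rfl fun e' _ => by split <;> ring

lemma excess_update (tail head : E → V) (d : V → ℝ) (y : E → ℝ) (e : E) (ε : ℝ) (w : V) :
    excess tail head d (fun e' => if e' = e then y e' + ε else y e') w
      = excess tail head d y w
        + ε * ((if tail e = w then 1 else 0) - (if head e = w then 1 else 0)) := by
  unfold excess
  rw [sum_update, sum_update]
  simp only [Finset.mem_filter, Finset.mem_univ, true_and]
  split <;> split <;> ring

lemma sum_excess (tail head : E → V) (d : V → ℝ) (y : E → ℝ) (hd : ∑ v, d v = 0) :
    ∑ v, excess tail head d y v = 0 := by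
  unfold excess
  rw [Finset.sum_sub_distrib, Finset.sum_sub_distrib, hd,
    Finset.sum_fiberwise_of_maps_to (g := tail) (t := univ) (fun e _ => mem_univ _) y,
    Finset.sum_fiberwise_of_maps_to (g := head) (t := univ) (fun e _ => mem_univ _) y]
  ring

lemma filter_eq_of_mem (tail : E → V) (P : E → Prop) [DecidablePred P] (T : Finset V)
    (v : V) (hv : v ∈ T) :
    (univ.filter (fun e => P e ∧ tail e ∈ T)).filter (fun e => tail e = v)
      = univ.filter (fun e => P e ∧ tail e = v) := by
  ext e
  simp only [mem_filter, mem_univ, true_and]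
  constructor
  · rintro ⟨⟨hP, _⟩, h2⟩; exact ⟨hP, h2⟩
  · rintro ⟨hP, h2⟩; exact ⟨⟨hP, h2 ▸ hv⟩, h2⟩

lemma sum_tail_fiber (tail : E → V) (y : E → ℝ) (P : E → Prop) [DecidablePred P]
    (T : Finset V) :
    ∑ v ∈ T, ∑ e ∈ univ.filter (fun e => P e ∧ tail e = v), y e
      = ∑ e ∈ univ.filter (fun e => P e ∧ tail e ∈ T), y e := by
  rw [← Finset.sum_fiberwise_of_maps_to (g := tail) (t := T)
      (fun e he => by simp only [mem_filter] at he; exact he.2.2) y]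
  exact Finset.sum_congr rfl fun v hv => by rw [filter_eq_of_mem tail P T v hv]

lemma cut_sum (tail head : E → V) (y : E → ℝ) (P : E → Prop) [DecidablePred P]
    (T : Finset V) :
    ∑ v ∈ T, ((∑ e ∈ univ.filter (fun e => P e ∧ tail e = v), y e)
      - ∑ e ∈ univ.filter (fun e => P e ∧ head e = v), y e)
    = (∑ e ∈ univ.filter (fun e => P e ∧ tail e ∈ T ∧ head e ∉ T), y e)
      - ∑ e ∈ univ.filter (fun e => P e ∧ head e ∈ T ∧ tail e ∉ T), y e := by
  rw [Finset.sum_sub_distrib, sum_tail_fiber tail y P T, sum_tail_fiber head y P T]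
  have h1 : ∑ e ∈ univ.filter (fun e => P e ∧ tail e ∈ T), y e
      = (∑ e ∈ univ.filter (fun e => (P e ∧ tail e ∈ T) ∧ head e ∈ T), y e)
        + ∑ e ∈ univ.filter (fun e => P e ∧ tail e ∈ T ∧ head e ∉ T), y e := by
    rw [← Finset.sum_filter_add_sum_filter_not (univ.filter (fun e => P e ∧ tail e ∈ T))
      (fun e => head e ∈ T) y, Finset.filter_filter, Finset.filter_filter]
    congr 1
    exact Finset.sum_congr (by apply Finset.filter_congr; intro e _; tauto) fun _ _ => rfl
  have h2 : ∑ e ∈ univ.filter (fun e => P e ∧ head e ∈ T), y e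
      = (∑ e ∈ univ.filter (fun e => (P e ∧ tail e ∈ T) ∧ head e ∈ T), y e)
        + ∑ e ∈ univ.filter (fun e => P e ∧ head e ∈ T ∧ tail e ∉ T), y e := by
    rw [← Finset.sum_filter_add_sum_filter_not (univ.filter (fun e => P e ∧ head e ∈ T))
      (fun e => tail e ∈ T) y, Finset.filter_filter, Finset.filter_filter]
    congr 1
    · exact Finset.sum_congr (by apply Finset.filter_congr; intro e _; tauto) fun _ _ => rfl
    · exact Finset.sum_congr (by apply Finset.filter_congr; intro e _; tauto) fun _ _ => rfl
  rw [h1, h2]; ring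

lemma sum_split3 (p F B : E → Prop) [DecidablePred p] [DecidablePred F] [DecidablePred B]
    (hFB : ∀ e, ¬(F e ∧ B e)) (g : E → ℝ) :
    ∑ e ∈ univ.filter p, g e
      = (∑ e ∈ univ.filter (fun e => (¬F e ∧ ¬B e) ∧ p e), g e)
        + (∑ e ∈ univ.filter (fun e => F e ∧ p e), g e)
        + ∑ e ∈ univ.filter (fun e => B e ∧ p e), g e := by
  rw [Finset.sum_filter, Finset.sum_filter, Finset.sum_filter, Finset.sum_filter,
    ← Finset.sum_add_distrib, ← Finset.sum_add_distrib]
  apply Finset.sum_congr rfl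
  intro e _
  by_cases hF : F e
  · by_cases hB : B e
    · exact absurd ⟨hF, hB⟩ (hFB e)
    · by_cases hp : p e <;> simp [hF, hB, hp]
  · by_cases hB : B e <;> by_cases hp : p e <;> simp [hF, hB, hp]

lemma maxCutRatio_nonneg (tail head : E → V) (d : V → ℝ) (lam : E → ℝ) :
    0 ≤ maxCutRatio tail head d lam :=
  Finset.le_max' _ 0 (Finset.mem_insert_self 0 _)

lemma cut_le (tail head : E → V) (d : V → ℝ) (lam : E → ℝ)
    (hd : ∑ v, d v = 0) (hlam : ∀ e, 0 < lam e) (hnf : NoFatalCut tail head d)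
    (T : Finset V) :
    ∑ v ∈ T, d v ≤ maxCutRatio tail head d lam * ∑ e ∈ fwd tail head T, lam e := by
  rcases T.eq_empty_or_nonempty with rfl | hT
  · simp [fwd]
  rcases Tᶜ.eq_empty_or_nonempty with hTc | hTc
  · have hTu : T = univ := by
      rwa [Finset.compl_eq_empty_iff] at hTc
    subst hTu
    have h1 : fwd tail head (univ : Finset V) = ∅ := by
      ext e; simp [fwd]
    rw [hd, h1]; simp
  rcases (fwd tail head T).eq_empty_or_nonempty with hf | hf
  · rw [hf]
    simpa using hnf T hT hTc hf
  · have hpos : 0 < ∑ e ∈ fwd tail head T, lam e := Finset.sum_pos (fun e _ => hlam e) hf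
    have hmem : (∑ v ∈ T, d v) / (∑ e ∈ fwd tail head T, lam e)
        ∈ insert (0 : ℝ)
          (((Finset.univ : Finset (Finset V)).filter
              (fun S => S.Nonempty ∧ Sᶜ.Nonempty ∧ (fwd tail head S).Nonempty)).image
            (fun S => (∑ v ∈ S, d v) / ∑ e ∈ fwd tail head S, lam e)) := by
      apply Finset.mem_insert_of_mem
      exact Finset.mem_image_of_mem _ (by simp [hT, hTc, hf])
    have := Finset.le_max' _ _ hmem
    rw [div_le_iff₀ hpos] at this
    unfold maxCutRatio
    linarith [this]

lemma cross_arcs_empty (tail head : E → V) (d : V → ℝ) (lam : E → ℝ)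
    (hd : ∑ v, d v = 0) (hlam : ∀ e, 0 < lam e) (hnf : NoFatalCut tail head d)
    (hr0pos : 0 < maxCutRatio tail head d lam)
    (S S' : Finset V)
    (hcrit : ∑ v ∈ S, d v = maxCutRatio tail head d lam * ∑ e ∈ fwd tail head S, lam e)
    (hcrit' : ∑ v ∈ S', d v = maxCutRatio tail head d lam * ∑ e ∈ fwd tail head S', lam e)
    (e : E) (h1 : tail e ∈ S') (h2 : tail e ∉ S) (h3 : head e ∈ S) (h4 : head e ∉ S') :
    False := by
  classical
  set r0 := maxCutRatio tail head d lam with hr0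
  have hU := cut_le tail head d lam hd hlam hnf (S ∪ S')
  have hI := cut_le tail head d lam hd hlam hnf (S ∩ S')
  have hsum : (∑ v ∈ S ∪ S', d v) + ∑ v ∈ S ∩ S', d v
      = (∑ v ∈ S, d v) + ∑ v ∈ S', d v := Finset.sum_union_inter
  have hsub : (∑ e' ∈ fwd tail head (S ∪ S'), lam e')
        + (∑ e' ∈ fwd tail head (S ∩ S'), lam e') + lam e
      ≤ (∑ e' ∈ fwd tail head S, lam e') + (∑ e' ∈ fwd tail head S', lam e') := by
    have he : lam e = ∑ e' ∈ univ, (if e' = e then lam e' else 0) := by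
      rw [Finset.sum_ite_eq' univ e lam, if_pos (mem_univ e)]
    unfold fwd
    rw [Finset.sum_filter, Finset.sum_filter, Finset.sum_filter, Finset.sum_filter, he,
      ← Finset.sum_add_distrib, ← Finset.sum_add_distrib, ← Finset.sum_add_distrib]
    apply Finset.sum_le_sum
    intro e' _
    by_cases hee : e' = e
    · subst hee
      simp [Finset.mem_union, Finset.mem_inter, h1, h2, h3, h4]
    · rw [if_neg hee]
      have hl := (hlam e').le
      by_cases a1 : tail e' ∈ S <;> by_cases a2 : tail e' ∈ S' <;>
        by_cases a3 : head e' ∈ S <;> by_cases a4 : head e' ∈ S' <;>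
        simp only [Finset.mem_union, Finset.mem_inter, a1, a2, a3, a4, true_and, false_and,
          and_true, and_false, true_or, or_true, false_or, or_false, not_true, not_false_iff,
          if_true, if_false, and_self, not_and, not_or] <;>
      simp_all <;> linarith
  nlinarith [hlam e]

lemma exists_feasible_flow (tail head : E → V) (d : V → ℝ) (c : E → ℝ)
    (hc : ∀ e, 0 ≤ c e) (hd : ∑ v, d v = 0)
    (hcut : ∀ T : Finset V, ∑ v ∈ T, d v ≤ ∑ e ∈ fwd tail head T, c e) :
    ∃ y : E → ℝ, (∀ e, 0 ≤ y e ∧ y e ≤ c e) ∧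
      ∀ v, excess tail head d y v = 0 := by
  classical
  set A : Set (E → ℝ) := Set.univ.pi (fun e => Set.Icc 0 (c e)) with hA
  have hAc : IsCompact A := isCompact_univ_pi (fun e => isCompact_Icc)
  have hAne : A.Nonempty := ⟨fun _ => 0, fun e _ => ⟨le_refl _, hc e⟩⟩
  have hmemA : ∀ y : E → ℝ, y ∈ A ↔ ∀ e, 0 ≤ y e ∧ y e ≤ c e := by
    intro y
    constructor
    · intro h e; exact h e (Set.mem_univ e)
    · intro h e _; exact h e
  set Φ : (E → ℝ) → ℝ := fun y => ∑ v, |excess tail head d y v| with hΦdef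
  have hcont : Continuous Φ := by
    apply continuous_finset_sum
    intro v _
    have h1 : Continuous (fun y : E → ℝ => excess tail head d y v) := by
      unfold excess
      exact ((continuous_finset_sum _ fun e _ => continuous_apply e).sub
        (continuous_finset_sum _ fun e _ => continuous_apply e)).sub continuous_const
    exact h1.abs
  obtain ⟨y, hyA, hmin⟩ := hAc.exists_isMinOn hAne hcont.continuousOn
  have hy := (hmemA y).1 hyA
  refine ⟨y, hy, ?_⟩
  by_contra hne
  push_neg at hne
  obtain ⟨v₀, hv₀⟩ := hne
  have hsum0 : ∑ w, excess tail head d y w = 0 := sum_excess tail head d y hd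
  have hexneg : ∃ v, excess tail head d y v < 0 := by
    by_contra h
    push_neg at h
    exact hv₀ ((Finset.sum_eq_zero_iff_of_nonneg (fun w _ => h w)).1 hsum0 v₀ (mem_univ _))
  have hexpos : ∃ u, 0 < excess tail head d y u := by
    by_contra h
    push_neg at h
    have h2 : ∑ w, (-excess tail head d y w) = 0 := by
      rw [Finset.sum_neg_distrib, hsum0, neg_zero]
    have := (Finset.sum_eq_zero_iff_of_nonneg
      (f := fun w => -excess tail head d y w) (fun w _ => by simpa using h w)).1 h2
    exact hv₀ (by have := this v₀ (mem_univ _); linarith)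
  obtain ⟨v, hv⟩ := hexneg
  set step : V → V → Prop := fun a b =>
    (∃ e, tail e = a ∧ head e = b ∧ y e < c e) ∨
    (∃ e, tail e = b ∧ head e = a ∧ 0 < y e) with hstepdef
  have aug : ∀ u, Relation.ReflTransGen step v u →
      ∃ n : ℕ, ∃ B : ℝ, 0 < B ∧ ∀ ε : ℝ, 0 < ε → ε ≤ B → ∃ y' : E → ℝ,
        (∀ e, 0 ≤ y' e ∧ y' e ≤ c e) ∧
        (∀ e, |y' e - y e| ≤ (n : ℝ) * ε) ∧
        (∀ w, excess tail head d y' w = excess tail head d y w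
          + ε * ((if v = w then 1 else 0) - (if u = w then 1 else 0))) := by
    intro u hu
    induction hu with
    | refl =>
        refine ⟨0, 1, one_pos, fun ε hε hεB => ⟨y, hy, fun e => by simp, fun w => by simp⟩⟩
    | @tail b u' hb hbu ih =>
        obtain ⟨n, B, hB, hih⟩ := ih
        rcases hbu with ⟨e, hte, hhe, hyc⟩ | ⟨e, hte, hhe, hyc⟩
        · refine ⟨n + 1, min B ((c e - y e) / ((n : ℝ) + 1)),
            lt_min hB (div_pos (sub_pos.2 hyc) (by positivity)), ?_⟩
          intro ε hε hεB
          obtain ⟨y', hy', hdiff, hex⟩ := hih ε hε (le_trans hεB (min_le_left _ _))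
          have hεe : ε * ((n : ℝ) + 1) ≤ c e - y e := by
            rw [← le_div_iff₀ (by positivity : (0:ℝ) < (n : ℝ) + 1)]
            exact le_trans hεB (min_le_right _ _)
          refine ⟨fun e' => if e' = e then y' e' + ε else y' e', ?_, ?_, ?_⟩
          · intro e'
            beta_reduce
            by_cases h : e' = e
            · subst h
              rw [if_pos rfl]
              have h1 := abs_le.1 (hdiff e')
              exact ⟨by linarith [(hy' e').1], by linarith⟩
            · rw [if_neg h]; exact hy' e'
          · intro e'
            beta_reduce
            by_cases h : e' = e
            · subst h
              rw [if_pos rfl]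
              have h1 := abs_le.1 (hdiff e')
              rw [abs_le]
              push_cast
              constructor <;> linarith
            · rw [if_neg h]
              have h1 := abs_le.1 (hdiff e')
              rw [abs_le]
              push_cast
              constructor <;> linarith
          · intro w
            rw [excess_update tail head d y' e ε w, hex w, hte, hhe]
            ring
        · refine ⟨n + 1, min B (y e / ((n : ℝ) + 1)),
            lt_min hB (div_pos hyc (by positivity)), ?_⟩
          intro ε hε hεB
          obtain ⟨y', hy', hdiff, hex⟩ := hih ε hε (le_trans hεB (min_le_left _ _))
          have hεe : ε * ((n : ℝ) + 1) ≤ y e := by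
            rw [← le_div_iff₀ (by positivity : (0:ℝ) < (n : ℝ) + 1)]
            exact le_trans hεB (min_le_right _ _)
          refine ⟨fun e' => if e' = e then y' e' + (-ε) else y' e', ?_, ?_, ?_⟩
          · intro e'
            beta_reduce
            by_cases h : e' = e
            · subst h
              rw [if_pos rfl]
              have h1 := abs_le.1 (hdiff e')
              exact ⟨by linarith, by linarith [(hy' e').2]⟩
            · rw [if_neg h]; exact hy' e'
          · intro e'
            beta_reduce
            by_cases h : e' = e
            · subst h
              rw [if_pos rfl]
              have h1 := abs_le.1 (hdiff e')
              rw [abs_le]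
              push_cast
              constructor <;> linarith
            · rw [if_neg h]
              have h1 := abs_le.1 (hdiff e')
              rw [abs_le]
              push_cast
              constructor <;> linarith
          · intro w
            rw [excess_update tail head d y' e (-ε) w, hex w, hte, hhe]
            ring
  have claim : ∀ u, Relation.ReflTransGen step v u → excess tail head d y u ≤ 0 := by
    intro u hu
    by_contra hupos
    push_neg at hupos
    obtain ⟨n, B, hB, hget⟩ := aug u hu
    have hvu : v ≠ u := fun h => by rw [h] at hv; linarith
    set ε := min B (min (-excess tail head d y v) (excess tail head d y u)) with hεdef
    have hεpos : 0 < ε := lt_min hB (lt_min (by linarith) hupos)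
    obtain ⟨y', hy', hdiff, hex⟩ := hget ε hεpos (min_le_left _ _)
    have hεv : ε ≤ -excess tail head d y v := le_trans (min_le_right _ _) (min_le_left _ _)
    have hεu : ε ≤ excess tail head d y u := le_trans (min_le_right _ _) (min_le_right _ _)
    have hptw : ∀ w, |excess tail head d y' w| = |excess tail head d y w|
        - (if v = w then ε else 0) - (if u = w then ε else 0) := by
      intro w
      rw [hex w]
      by_cases h1 : v = w
      · subst h1
        rw [if_pos rfl, if_pos rfl, if_neg (Ne.symm hvu), if_neg (Ne.symm hvu)]
        rw [abs_of_nonpos (by linarith), abs_of_neg hv]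
        ring
      · by_cases h2 : u = w
        · subst h2
          rw [if_neg h1, if_neg h1, if_pos rfl, if_pos rfl]
          rw [abs_of_nonneg (by linarith), abs_of_pos hupos]
          ring
        · rw [if_neg h1, if_neg h1, if_neg h2, if_neg h2]
          norm_num
    have hΦ' : Φ y' = Φ y - 2 * ε := by
      show ∑ w, |excess tail head d y' w| = (∑ w, |excess tail head d y w|) - 2 * ε
      rw [Finset.sum_congr rfl fun w _ => hptw w]
      rw [Finset.sum_sub_distrib, Finset.sum_sub_distrib,
        Finset.sum_ite_eq univ v (fun _ => ε), Finset.sum_ite_eq univ u (fun _ => ε)]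
      simp only [mem_univ, if_true]
      ring
    have hle : Φ y ≤ Φ y' := isMinOn_iff.1 hmin y' ((hmemA y').2 hy')
    linarith
  obtain ⟨u₀, hu₀⟩ := hexpos
  set RF : Finset V := univ.filter (fun u => Relation.ReflTransGen step v u) with hRFdef
  have hvRF : v ∈ RF := mem_filter.2 ⟨mem_univ _, Relation.ReflTransGen.refl⟩
  have hstepcl : ∀ a b, a ∈ RF → step a b → b ∈ RF := by
    intro a b ha hab
    exact mem_filter.2 ⟨mem_univ _, (mem_filter.1 ha).2.tail hab⟩
  have hfsat : ∀ e' ∈ univ.filter (fun e => tail e ∈ RF ∧ head e ∉ RF), y e' = c e' := by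
    intro e' he'
    rw [mem_filter] at he'
    by_contra hne2
    exact he'.2.2 (hstepcl _ _ he'.2.1 (Or.inl ⟨e', rfl, rfl, lt_of_le_of_ne (hy e').2 hne2⟩))
  have hbsat : ∀ e' ∈ univ.filter (fun e => head e ∈ RF ∧ tail e ∉ RF), y e' = 0 := by
    intro e' he'
    rw [mem_filter] at he'
    by_contra hne2
    exact he'.2.2 (hstepcl _ _ he'.2.1
      (Or.inr ⟨e', rfl, rfl, lt_of_le_of_ne (hy e').1 (Ne.symm hne2)⟩))
  have hs : ∑ w ∈ RF, excess tail head d y w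
      = (∑ e' ∈ univ.filter (fun e => tail e ∈ RF ∧ head e ∉ RF), y e')
        - (∑ e' ∈ univ.filter (fun e => head e ∈ RF ∧ tail e ∉ RF), y e')
        - ∑ w ∈ RF, d w := by
    have h := cut_sum tail head y (fun _ => True) RF
    simp only [true_and] at h
    unfold excess
    rw [Finset.sum_sub_distrib, h]
  have hneg : ∑ w ∈ RF, excess tail head d y w < 0 := by
    have := Finset.sum_lt_sum (f := fun w => excess tail head d y w) (g := fun _ => (0:ℝ))
      (fun w hw => claim w (mem_filter.1 hw).2) ⟨v, hvRF, hv⟩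
    simpa using this
  have hfc : ∑ e' ∈ univ.filter (fun e => tail e ∈ RF ∧ head e ∉ RF), y e'
      = ∑ e' ∈ fwd tail head RF, c e' :=
    Finset.sum_congr rfl hfsat
  have hb0 : ∑ e' ∈ univ.filter (fun e => head e ∈ RF ∧ tail e ∉ RF), y e' = 0 :=
    Finset.sum_eq_zero hbsat
  rw [hs, hfc, hb0] at hneg
  have := hcut RF
  linarith

end Aux

theorem reduced_minmax_ratio_eq_of_second_critical_cut
    {V E : Type*} [Fintype V] [DecidableEq V] [Fintype E] [Nonempty E]
    (tail head : E → V) (d : V → ℝ) (lam : E → ℝ)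
    (hd : ∑ v, d v = 0) (hlam : ∀ e, 0 < lam e)
    (hnf : NoFatalCut tail head d)
    (hr0pos : 0 < maxCutRatio tail head d lam)
    (S S' : Finset V) (hS : S.Nonempty) (hS1 : Sᶜ.Nonempty)
    (hS2 : S'.Nonempty) (hS3 : S'ᶜ.Nonempty) (hSS : S ≠ S')
    (hfwd : (fwd tail head S).Nonempty) (hfwd' : (fwd tail head S').Nonempty)
    (hcrit : ∑ v ∈ S, d v = maxCutRatio tail head d lam * ∑ e ∈ fwd tail head S, lam e)
    (hcrit' : ∑ v ∈ S', d v = maxCutRatio tail head d lam * ∑ e ∈ fwd tail head S', lam e)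
    (e₀ : E) (he₀ : e₀ ∈ fwd tail head S' ∧ e₀ ∉ fwd tail head S)
    (r1 : ℝ)
    (hr1 : IsLeast {r : ℝ | ∃ x : E → ℝ,
        WeaklyFeasibleReduced tail head d lam (maxCutRatio tail head d lam) S x ∧
        ∀ e, NotCrossing tail head S e → x e ≤ r * lam e} r1) :
    r1 = maxCutRatio tail head d lam := by
  classical
  set r0 := maxCutRatio tail head d lam with hr0def
  have hr0nn : 0 ≤ r0 := maxCutRatio_nonneg tail head d lam
  have he₀f : tail e₀ ∈ S' ∧ head e₀ ∉ S' := by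
    have h := he₀.1
    rw [fwd, mem_filter] at h
    exact h.2
  have he₀nc : NotCrossing tail head S e₀ := by
    constructor
    · intro h
      exact he₀.2 (by rw [fwd, mem_filter]; exact ⟨mem_univ _, h⟩)
    · rintro ⟨hh, ht⟩
      exact cross_arcs_empty tail head d lam hd hlam hnf hr0pos S S' hcrit hcrit' e₀
        he₀f.1 ht hh he₀f.2
  have hlb : ∀ r ∈ {r : ℝ | ∃ x : E → ℝ,
      WeaklyFeasibleReduced tail head d lam r0 S x ∧
      ∀ e, NotCrossing tail head S e → x e ≤ r * lam e}, r0 ≤ r := by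
    rintro r ⟨x, ⟨hx0, hxcons⟩, hxr⟩
    have hcs := cut_sum tail head x (NotCrossing tail head S) S'
    have hDsum : ∑ v ∈ S', reducedD tail head d lam r0 S v
        = (∑ e ∈ univ.filter
            (fun e => NotCrossing tail head S e ∧ tail e ∈ S' ∧ head e ∉ S'), x e)
          - ∑ e ∈ univ.filter
            (fun e => NotCrossing tail head S e ∧ head e ∈ S' ∧ tail e ∉ S'), x e := by
      rw [← hcs]
      exact Finset.sum_congr rfl fun v _ => (hxcons v).symm
    have h1 : ∑ v ∈ S', ∑ e ∈ (fwd tail head S).filter (fun e => tail e = v), lam e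
        = ∑ e ∈ univ.filter (fun e => (tail e ∈ S ∧ head e ∉ S) ∧ tail e ∈ S'), lam e := by
      rw [← sum_tail_fiber tail lam (fun e => tail e ∈ S ∧ head e ∉ S) S']
      apply Finset.sum_congr rfl
      intro v _
      apply Finset.sum_congr _ (fun _ _ => rfl)
      rw [fwd, Finset.filter_filter]
    have h2 : ∑ v ∈ S', ∑ e ∈ (fwd tail head S).filter (fun e => head e = v), lam e
        = ∑ e ∈ univ.filter (fun e => (tail e ∈ S ∧ head e ∉ S) ∧ head e ∈ S'), lam e := by
      rw [← sum_tail_fiber head lam (fun e => tail e ∈ S ∧ head e ∉ S) S']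
      apply Finset.sum_congr rfl
      intro v _
      apply Finset.sum_congr _ (fun _ _ => rfl)
      rw [fwd, Finset.filter_filter]
    have hred : ∑ v ∈ S', reducedD tail head d lam r0 S v
        = (∑ v ∈ S', d v)
          - r0 * (∑ e ∈ univ.filter
              (fun e => (tail e ∈ S ∧ head e ∉ S) ∧ tail e ∈ S'), lam e)
          + r0 * ∑ e ∈ univ.filter
              (fun e => (tail e ∈ S ∧ head e ∉ S) ∧ head e ∈ S'), lam e := by
      unfold reducedD
      rw [Finset.sum_add_distrib, Finset.sum_sub_distrib, ← Finset.mul_sum, ← Finset.mul_sum,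
        h1, h2]
    have hpoint : (∑ e ∈ univ.filter
            (fun e => NotCrossing tail head S e ∧ tail e ∈ S' ∧ head e ∉ S'), lam e)
          + (∑ e ∈ univ.filter
            (fun e => (tail e ∈ S ∧ head e ∉ S) ∧ tail e ∈ S'), lam e)
        ≤ (∑ e ∈ fwd tail head S', lam e)
          + ∑ e ∈ univ.filter
            (fun e => (tail e ∈ S ∧ head e ∉ S) ∧ head e ∈ S'), lam e := by
      unfold fwd
      rw [Finset.sum_filter, Finset.sum_filter, Finset.sum_filter, Finset.sum_filter,
        ← Finset.sum_add_distrib, ← Finset.sum_add_distrib]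
      apply Finset.sum_le_sum
      intro e _
      have hl := (hlam e).le
      by_cases a1 : tail e ∈ S <;> by_cases a2 : tail e ∈ S' <;>
        by_cases a3 : head e ∈ S <;> by_cases a4 : head e ∈ S' <;>
        simp [NotCrossing, a1, a2, a3, a4] <;> linarith
    have hDlow : r0 * (∑ e ∈ univ.filter
        (fun e => NotCrossing tail head S e ∧ tail e ∈ S' ∧ head e ∉ S'), lam e)
        ≤ ∑ v ∈ S', reducedD tail head d lam r0 S v := by
      rw [hred, hcrit']
      have h3 := mul_le_mul_of_nonneg_left hpoint hr0nn
      rw [mul_add, mul_add] at h3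
      linarith
    have hDup : ∑ v ∈ S', reducedD tail head d lam r0 S v
        ≤ r * ∑ e ∈ univ.filter
          (fun e => NotCrossing tail head S e ∧ tail e ∈ S' ∧ head e ∉ S'), lam e := by
      rw [hDsum]
      have hA : ∑ e ∈ univ.filter
            (fun e => NotCrossing tail head S e ∧ tail e ∈ S' ∧ head e ∉ S'), x e
          ≤ r * ∑ e ∈ univ.filter
            (fun e => NotCrossing tail head S e ∧ tail e ∈ S' ∧ head e ∉ S'), lam e := by
        rw [Finset.mul_sum]
        exact Finset.sum_le_sum fun e he => hxr e (mem_filter.1 he).2.1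
      have hB : 0 ≤ ∑ e ∈ univ.filter
            (fun e => NotCrossing tail head S e ∧ head e ∈ S' ∧ tail e ∉ S'), x e :=
        Finset.sum_nonneg fun e he => hx0 e (mem_filter.1 he).2.1
      linarith
    have hlamApos : 0 < ∑ e ∈ univ.filter
        (fun e => NotCrossing tail head S e ∧ tail e ∈ S' ∧ head e ∉ S'), lam e :=
      Finset.sum_pos (fun e _ => hlam e)
        ⟨e₀, mem_filter.2 ⟨mem_univ _, he₀nc, he₀f.1, he₀f.2⟩⟩
    exact le_of_mul_le_mul_right (by linarith) hlamApos
  have hmem : r0 ∈ {r : ℝ | ∃ x : E → ℝ,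
      WeaklyFeasibleReduced tail head d lam r0 S x ∧
      ∀ e, NotCrossing tail head S e → x e ≤ r * lam e} := by
    have hcut2 : ∀ T : Finset V, ∑ v ∈ T, d v ≤ ∑ e ∈ fwd tail head T, r0 * lam e := by
      intro T
      rw [← Finset.mul_sum]
      exact cut_le tail head d lam hd hlam hnf T
    obtain ⟨y, hy, hyex⟩ := exists_feasible_flow tail head d (fun e => r0 * lam e)
      (fun e => mul_nonneg hr0nn (hlam e).le) hd hcut2
    have hycons : ∀ v, (∑ e ∈ univ.filter (fun e => tail e = v), y e)
        - (∑ e ∈ univ.filter (fun e => head e = v), y e) = d v := by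
      intro v
      have h := hyex v
      unfold excess at h
      linarith
    have hSsum : (∑ e ∈ univ.filter (fun e => tail e ∈ S ∧ head e ∉ S), y e)
        - (∑ e ∈ univ.filter (fun e => head e ∈ S ∧ tail e ∉ S), y e)
        = ∑ v ∈ S, d v := by
      have h := cut_sum tail head y (fun _ => True) S
      simp only [true_and] at h
      rw [← h]
      exact Finset.sum_congr rfl fun v _ => hycons v
    have hFle : ∑ e ∈ univ.filter (fun e => tail e ∈ S ∧ head e ∉ S), y e
        ≤ ∑ e ∈ univ.filter (fun e => tail e ∈ S ∧ head e ∉ S), r0 * lam e :=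
      Finset.sum_le_sum fun e _ => (hy e).2
    have hBnn : 0 ≤ ∑ e ∈ univ.filter (fun e => head e ∈ S ∧ tail e ∉ S), y e :=
      Finset.sum_nonneg fun e _ => (hy e).1
    have hFsum : ∑ e ∈ univ.filter (fun e => tail e ∈ S ∧ head e ∉ S), r0 * lam e
        = ∑ v ∈ S, d v := by
      rw [← Finset.mul_sum, hcrit]
      rfl
    have hB0 : ∑ e ∈ univ.filter (fun e => head e ∈ S ∧ tail e ∉ S), y e = 0 := by
      linarith
    have hFeq : ∑ e ∈ univ.filter (fun e => tail e ∈ S ∧ head e ∉ S), y e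
        = ∑ e ∈ univ.filter (fun e => tail e ∈ S ∧ head e ∉ S), r0 * lam e := by
      linarith
    have hyB : ∀ e, head e ∈ S → tail e ∉ S → y e = 0 := by
      intro e hh ht
      exact (Finset.sum_eq_zero_iff_of_nonneg (fun e _ => (hy e).1)).1 hB0 e
        (mem_filter.2 ⟨mem_univ _, hh, ht⟩)
    have hyF : ∀ e, tail e ∈ S → head e ∉ S → y e = r0 * lam e := by
      have hz : ∑ e ∈ univ.filter (fun e => tail e ∈ S ∧ head e ∉ S),
          (r0 * lam e - y e) = 0 := by
        rw [Finset.sum_sub_distrib]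
        linarith
      intro e ht hh
      have h := (Finset.sum_eq_zero_iff_of_nonneg
        (fun e _ => sub_nonneg.2 (hy e).2)).1 hz e (mem_filter.2 ⟨mem_univ _, ht, hh⟩)
      linarith
    refine ⟨y, ⟨fun e _ => (hy e).1, ?_⟩, fun e _ => (hy e).2⟩
    intro v
    have hFB : ∀ e, ¬((tail e ∈ S ∧ head e ∉ S) ∧ (head e ∈ S ∧ tail e ∉ S)) := by tauto
    have hsT := sum_split3 (fun e => tail e = v) (fun e => tail e ∈ S ∧ head e ∉ S)
      (fun e => head e ∈ S ∧ tail e ∉ S) hFB y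
    have hsH := sum_split3 (fun e => head e = v) (fun e => tail e ∈ S ∧ head e ∉ S)
      (fun e => head e ∈ S ∧ tail e ∉ S) hFB y
    have hFT : ∑ e ∈ univ.filter (fun e => (tail e ∈ S ∧ head e ∉ S) ∧ tail e = v), y e
        = r0 * ∑ e ∈ (fwd tail head S).filter (fun e => tail e = v), lam e := by
      rw [Finset.mul_sum, fwd, Finset.filter_filter]
      exact Finset.sum_congr rfl fun e he =>
        hyF e (mem_filter.1 he).2.1.1 (mem_filter.1 he).2.1.2
    have hFH : ∑ e ∈ univ.filter (fun e => (tail e ∈ S ∧ head e ∉ S) ∧ head e = v), y e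
        = r0 * ∑ e ∈ (fwd tail head S).filter (fun e => head e = v), lam e := by
      rw [Finset.mul_sum, fwd, Finset.filter_filter]
      exact Finset.sum_congr rfl fun e he =>
        hyF e (mem_filter.1 he).2.1.1 (mem_filter.1 he).2.1.2
    have hBT : ∑ e ∈ univ.filter (fun e => (head e ∈ S ∧ tail e ∉ S) ∧ tail e = v), y e
        = 0 :=
      Finset.sum_eq_zero fun e he =>
        hyB e (mem_filter.1 he).2.1.1 (mem_filter.1 he).2.1.2
    have hBH : ∑ e ∈ univ.filter (fun e => (head e ∈ S ∧ tail e ∉ S) ∧ head e = v), y e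
        = 0 :=
      Finset.sum_eq_zero fun e he =>
        hyB e (mem_filter.1 he).2.1.1 (mem_filter.1 he).2.1.2
    have hNT : univ.filter (fun e => NotCrossing tail head S e ∧ tail e = v)
        = univ.filter (fun e => (¬(tail e ∈ S ∧ head e ∉ S)
            ∧ ¬(head e ∈ S ∧ tail e ∉ S)) ∧ tail e = v) :=
      Finset.filter_congr fun e _ => Iff.rfl
    have hNH : univ.filter (fun e => NotCrossing tail head S e ∧ head e = v)
        = univ.filter (fun e => (¬(tail e ∈ S ∧ head e ∉ S)
            ∧ ¬(head e ∈ S ∧ tail e ∉ S)) ∧ head e = v) :=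
      Finset.filter_congr fun e _ => Iff.rfl
    unfold reducedD
    rw [hNT, hNH]
    linarith [hsT, hsH, hFT, hFH, hBT, hBH, hycons v]
  exact le_antisymm (hr1.2 hmem) (hlb r1 hr1.1)
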